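/- arXiv:math/9802068 — 3 statements merged into one kernel-verified Lean document; each statement's English description precedes it below -/
import Mathlib

section
/- Suppose ∫_{Q_p} exp(2πi({t₀x}_p - r)) μ(dx) = 1 for a probability measure μ on Q_p, t₀ ∈ Q_p, and r ∈ [0,1). Then either r = 0 or r is a rational number of the form p^{-n}(a₀ + a₁p + ⋯ + a_{n-1}p^{n-1}) with n ≥ 1, a_j ∈ {0,...,p-1}, a₀ ≠ 0; in either case there exists ξ ∈ Q_p with r = {t₀ξ}_p. -/
open MeasureTheory Metric Filter Topology
open scoped ENNReal NNReal

noncomputable section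

variable {p : ℕ} [Fact p.Prime]

instance : MeasurableSpace ℚ_[p] := borel _
instance : BorelSpace ℚ_[p] := ⟨rfl⟩

/-- The `p`-adic fractional part of `x : ℚ_[p]`: a rational of the form
`k / p^n`, `0 ≤ k < p^n`, with `‖x - {x}_p‖ ≤ 1`. -/
def padicFract (x : ℚ_[p]) : ℚ :=
  let n : ℕ := (-x.valuation).toNat
  (PadicInt.appr ⟨(p : ℚ_[p]) ^ n * x, by
      rcases eq_or_ne x 0 with h | h
      · simp [h]
      · rw [norm_mul, Padic.norm_p_pow, Padic.norm_eq_zpow_neg_valuation h]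
        rw [← Real.rpow_intCast, ← Real.rpow_intCast, ← Real.rpow_add
          (by exact_mod_cast (Fact.out : p.Prime).pos)]
        refine Real.rpow_le_one_of_one_le_of_nonpos
          (by exact_mod_cast (Fact.out : p.Prime).one_lt.le) ?_
        have h2 := Int.self_le_toNat (-x.valuation)
        push_cast
        exact_mod_cast (by omega :
          -(((-x.valuation).toNat : ℤ) : ℤ) + -x.valuation ≤ 0)⟩ n : ℚ)
    / (p : ℚ) ^ n

/-- The canonical additive character `χ(x) = exp(2πi {x}_p)` of `ℚ_[p]`. -/
def padicChar (x : ℚ_[p]) : ℂ :=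
  Complex.exp (2 * Real.pi * Complex.I * (padicFract x : ℂ))

/-- The characteristic function of a measure on `ℚ_[p]`. -/
def padicCharFun (μ : Measure ℚ_[p]) (t : ℚ_[p]) : ℂ :=
  ∫ x, padicChar (t * x) ∂μ

/-- The Haar measure on `ℚ_[p]` normalized so that the unit ball has measure 1. -/
def padicHaar : Measure ℚ_[p] :=
  Measure.addHaarMeasure
    ⟨⟨closedBall 0 1, isCompact_closedBall 0 1⟩, by
      refine ⟨0, ?_⟩
      rw [(IsUltrametricDist.isOpen_closedBall (0 : ℚ_[p]) one_ne_zero).interior_eq]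
      exact mem_closedBall_self zero_le_one⟩

/-!
The integrand has modulus one and integral one, so by strict convexity of `ℂ` it equals `1`
almost everywhere. At any such point `ξ`, both `{t₀ ξ}_p` and `r` lie in `[0, 1)`, so
`exp (2πi ({t₀ ξ}_p - r)) = 1` forces `r = {t₀ ξ}_p = k / p ^ n` with `k < p ^ n`. Cancelling the
powers of `p` dividing `k` and expanding the remaining numerator in base `p` gives the digit
expansion with `a₀ ≠ 0`.
-/

theorem ae_eq_integral_of_norm_le_of_norm_integral_eq {α E : Type*} [MeasurableSpace α]
    {μ : Measure α} [IsProbabilityMeasure μ] [NormedAddCommGroup E] [NormedSpace ℝ E]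
    [CompleteSpace E] [StrictConvexSpace ℝ E] {f : α → E} {C : ℝ} (h_le : ∀ᵐ x ∂μ, ‖f x‖ ≤ C)
    (h_eq : ‖∫ x, f x ∂μ‖ = C) : f =ᵐ[μ] Function.const α (∫ x, f x ∂μ) := by
  have h := ae_eq_const_or_norm_integral_lt_of_norm_le_const h_le
  simp only [probReal_univ, one_mul, h_eq, lt_self_iff_false, or_false] at h
  rwa [average_eq_integral] at h

theorem norm_exp_two_pi_I_mul_sub (a b : ℝ) :
    ‖Complex.exp (2 * Real.pi * Complex.I * ((a : ℂ) - (b : ℂ)))‖ = 1 := by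
  rw [Complex.norm_exp]
  simp

theorem eq_of_exp_two_pi_I_mul_sub_eq_one {a b : ℝ} (ha : a ∈ Set.Ico (0 : ℝ) 1)
    (hb : b ∈ Set.Ico (0 : ℝ) 1)
    (h : Complex.exp (2 * Real.pi * Complex.I * ((a : ℂ) - (b : ℂ))) = 1) : a = b := by
  obtain ⟨n, hn⟩ := Complex.exp_eq_one_iff.mp h
  have hab : a - b = n := by
    have h2πI : 2 * (Real.pi : ℂ) * Complex.I ≠ 0 := by simp [Real.pi_ne_zero]
    exact_mod_cast mul_left_cancel₀ h2πI (hn.trans (mul_comm _ _))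
  have hn0 : n = 0 := by
    rw [← Int.abs_lt_one_iff, ← Int.cast_lt (R := ℝ), Int.cast_abs, ← hab, abs_lt]
    push_cast
    constructor <;> linarith [ha.1, ha.2, hb.1, hb.2]
  simpa [hn0, sub_eq_zero] using hab

theorem Nat.sum_range_div_pow_mod_mul_pow (b k n : ℕ) :
    ∑ j ∈ Finset.range n, k / b ^ j % b * b ^ j = k % b ^ n := by
  induction n with
  | zero => simp [Nat.mod_one]
  | succ n ih => rw [Finset.sum_range_succ, ih, Nat.mod_pow_succ]; ring

theorem exists_digits_of_not_dvd {b k n : ℕ} (hb : 0 < b) (hbk : ¬ b ∣ k) (hkn : k < b ^ n) :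
    ∃ a : ℕ → ℕ, 1 ≤ n ∧ (∀ j < n, a j < b) ∧ a 0 ≠ 0 ∧
      (k : ℝ) = ∑ j ∈ Finset.range n, (a j : ℝ) * (b : ℝ) ^ j := by
  refine ⟨fun j => k / b ^ j % b, ?_, fun j _ => Nat.mod_lt _ hb, ?_, ?_⟩
  · exact Nat.one_le_iff_ne_zero.mpr (by rintro rfl; simp_all)
  · simpa [Nat.dvd_iff_mod_eq_zero] using hbk
  · exact_mod_cast (Nat.sum_range_div_pow_mod_mul_pow b k n).trans (Nat.mod_eq_of_lt hkn) |>.symm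

theorem exists_not_dvd_div_pow_eq {p k n : ℕ} (hp : p.Prime) (hk : k ≠ 0) (hkn : k < p ^ n) :
    ∃ m k' : ℕ, ¬ p ∣ k' ∧ k' < p ^ m ∧ (k : ℝ) / (p : ℝ) ^ n = (k' : ℝ) / (p : ℝ) ^ m := by
  set v := k.factorization p
  have hk' : p ^ v * (k / p ^ v) = k := Nat.ordProj_mul_ordCompl_eq_self k p
  have hvn : v ≤ n :=
    (Nat.pow_lt_pow_iff_right hp.one_lt).mp ((Nat.ordProj_le p hk).trans_lt hkn) |>.le
  have hpn : p ^ n = p ^ v * p ^ (n - v) := by rw [← pow_add, Nat.add_sub_cancel' hvn]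
  refine ⟨n - v, k / p ^ v, Nat.not_dvd_ordCompl hp hk, ?_, ?_⟩
  · rw [← hk', hpn] at hkn
    exact Nat.lt_of_mul_lt_mul_left hkn
  · have hpv : (p : ℝ) ^ v ≠ 0 := pow_ne_zero _ (by exact_mod_cast hp.ne_zero)
    have hkR : (k : ℝ) = (p : ℝ) ^ v * (k / p ^ v : ℕ) := by exact_mod_cast hk'.symm
    have hpnR : (p : ℝ) ^ n = (p : ℝ) ^ v * (p : ℝ) ^ (n - v) := by exact_mod_cast hpn
    rw [hkR, hpnR, mul_div_mul_left _ _ hpv]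

theorem padicFract_eq_div (x : ℚ_[p]) :
    ∃ n k : ℕ, k < p ^ n ∧ padicFract x = (k : ℚ) / (p : ℚ) ^ n :=
  ⟨_, _, PadicInt.appr_lt _ _, rfl⟩

theorem padicFract_mem_Ico (x : ℚ_[p]) : (padicFract x : ℝ) ∈ Set.Ico 0 1 := by
  obtain ⟨n, k, hkn, hx⟩ := padicFract_eq_div x
  have hpn : (0 : ℝ) < (p : ℝ) ^ n := pow_pos (by exact_mod_cast (Fact.out : p.Prime).pos) n
  rw [hx, Rat.cast_div, Rat.cast_pow, Rat.cast_natCast, Rat.cast_natCast]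
  exact ⟨by positivity, (div_lt_one hpn).mpr (by exact_mod_cast hkn)⟩

theorem padicFract_eq_zero_or_exists_digits (x : ℚ_[p]) :
    (padicFract x : ℝ) = 0 ∨ ∃ (n : ℕ) (a : ℕ → ℕ), 1 ≤ n ∧ (∀ j < n, a j < p) ∧ a 0 ≠ 0 ∧
      (padicFract x : ℝ) = (∑ j ∈ Finset.range n, (a j : ℝ) * (p : ℝ) ^ j) / (p : ℝ) ^ n := by
  obtain ⟨n, k, hkn, hx⟩ := padicFract_eq_div x
  rw [hx, Rat.cast_div, Rat.cast_pow, Rat.cast_natCast, Rat.cast_natCast]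
  rcases eq_or_ne k 0 with rfl | hk
  · simp
  obtain ⟨m, k', hpk', hk'm, hkk'⟩ := exists_not_dvd_div_pow_eq Fact.out hk hkn
  obtain ⟨a, hm, ha, ha0, hk'⟩ :=
    exists_digits_of_not_dvd (Fact.out : p.Prime).pos hpk' hk'm
  exact Or.inr ⟨m, a, hm, ha, ha0, by rw [hkk', hk']⟩

/-- If `∫ exp(2πi({t₀ x}_p - r)) dμ(x) = 1` with `0 ≤ r < 1`, then `r = 0` or `r` is a
rational of the form `p^{-n}(a₀ + a₁ p + ⋯ + a_{n-1} p^{n-1})` with `a₀ ≠ 0`; in either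
case `r = {t₀ ξ}_p` for some `ξ ∈ ℚ_[p]`. -/
theorem stmt_3 {p : ℕ} [Fact p.Prime] (μ : Measure ℚ_[p]) [IsProbabilityMeasure μ]
    (t₀ : ℚ_[p]) (r : ℝ) (hr0 : 0 ≤ r) (hr1 : r < 1)
    (h : ∫ x, Complex.exp (2 * Real.pi * Complex.I *
        (((padicFract (t₀ * x) : ℝ) : ℂ) - (r : ℂ))) ∂μ = 1) :
    (r = 0 ∨ ∃ (n : ℕ) (a : ℕ → ℕ), 1 ≤ n ∧ (∀ j < n, a j < p) ∧ a 0 ≠ 0 ∧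
        r = (∑ j ∈ Finset.range n, (a j : ℝ) * (p : ℝ) ^ j) / (p : ℝ) ^ n) ∧
      ∃ ξ : ℚ_[p], r = (padicFract (t₀ * ξ) : ℝ) := by
  have h_ae := ae_eq_integral_of_norm_le_of_norm_integral_eq (C := 1)
    (ae_of_all μ fun x => (norm_exp_two_pi_I_mul_sub (padicFract (t₀ * x)) r).le)
    (by rw [h, norm_one])
  obtain ⟨ξ, hξ⟩ := h_ae.exists
  rw [h] at hξ
  have hr : r = padicFract (t₀ * ξ) :=
    (eq_of_exp_two_pi_I_mul_sub_eq_one (padicFract_mem_Ico _) ⟨hr0, hr1⟩ hξ).symm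
  refine ⟨?_, ξ, hr⟩
  rw [hr]
  exact padicFract_eq_zero_or_exists_digits _

end
end

section
/- Let g : Q_p → ℂ be continuous with g(0) = 1, and suppose there are γ₀ ∈ Q_p with 0 < |γ₀|_p ≤ p^{-1} and β ∈ (0,1] such that |g(γ₀ t)| = |g(t)|^β for all t ∈ Q_p. Then g(t) ≠ 0 for every t ∈ Q_p. -/
/-! Zeros of `g` propagate along `t, γ₀ t, γ₀² t, …` because `0 ^ β = 0` for `β > 0`; this
sequence tends to `0` since `‖γ₀‖ < 1`, so continuity at `0` would force `g 0 = 0`. -/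

open MeasureTheory Metric Filter Topology
open scoped ENNReal NNReal

noncomputable section

variable {p : ℕ} [Fact p.Prime]

theorem Padic.norm_lt_one_of_norm_le_inv_prime {x : ℚ_[p]} (hx : ‖x‖ ≤ (p : ℝ)⁻¹) :
    ‖x‖ < 1 :=
  hx.trans_lt (inv_lt_one_of_one_lt₀ (mod_cast (Fact.out : p.Prime).one_lt))

theorem apply_pow_mul_eq_zero_of_norm_apply_mul {M E : Type*} [Monoid M] [NormedAddCommGroup E]
    {g : M → E} {γ : M} {β : ℝ} (hβ : 0 < β) (h : ∀ t, ‖g (γ * t)‖ = ‖g t‖ ^ β)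
    {t : M} (ht : g t = 0) (n : ℕ) : g (γ ^ n * t) = 0 := by
  induction n with
  | zero => simpa using ht
  | succ n ih =>
    rw [pow_succ', mul_assoc, ← norm_eq_zero, h, ih, norm_zero, Real.zero_rpow hβ.ne']

theorem apply_ne_zero_of_norm_apply_mul {R E : Type*} [SeminormedRing R] [NormedAddCommGroup E]
    {g : R → E} (hg : ContinuousAt g 0) (hg0 : g 0 ≠ 0) {γ : R} (hγ : ‖γ‖ < 1) {β : ℝ}
    (hβ : 0 < β) (h : ∀ t, ‖g (γ * t)‖ = ‖g t‖ ^ β) (t : R) : g t ≠ 0 := by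
  intro ht
  have hlim : Tendsto (fun n : ℕ ↦ γ ^ n * t) atTop (𝓝 0) := by
    simpa using (tendsto_pow_atTop_nhds_zero_of_norm_lt_one hγ).mul_const t
  have hglim := hg.tendsto.comp hlim
  simp only [Function.comp_def, apply_pow_mul_eq_zero_of_norm_apply_mul hβ h ht] at hglim
  exact hg0 (tendsto_nhds_unique hglim tendsto_const_nhds)

theorem stmt_6_general {p : ℕ} [Fact p.Prime] (g : ℚ_[p] → ℂ) (hg : Continuous g)
    (hg0 : g 0 = 1) (γ₀ : ℚ_[p]) (hγ : ‖γ₀‖ ≤ (p : ℝ)⁻¹)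
    (β : ℝ) (hβ0 : 0 < β)
    (h : ∀ t : ℚ_[p], ‖g (γ₀ * t)‖ = ‖g t‖ ^ β) :
    ∀ t : ℚ_[p], g t ≠ 0 :=
  apply_ne_zero_of_norm_apply_mul hg.continuousAt (by simp [hg0])
    (Padic.norm_lt_one_of_norm_le_inv_prime hγ) hβ0 h

/-- Corollary 1: if `g` is continuous with `g(0) = 1` and `|g(γ₀ t)| = |g(t)|^β` with
`0 < |γ₀|_p ≤ p⁻¹` and `0 < β ≤ 1`, then `g` never vanishes. -/
theorem stmt_6 {p : ℕ} [Fact p.Prime] (g : ℚ_[p] → ℂ) (hg : Continuous g)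
    (hg0 : g 0 = 1) (γ₀ : ℚ_[p]) (hγ0 : γ₀ ≠ 0) (hγ : ‖γ₀‖ ≤ (p : ℝ)⁻¹)
    (β : ℝ) (hβ0 : 0 < β) (hβ1 : β ≤ 1)
    (h : ∀ t : ℚ_[p], ‖g (γ₀ * t)‖ = ‖g t‖ ^ β) :
    ∀ t : ℚ_[p], g t ≠ 0 :=
  stmt_6_general g hg hg0 γ₀ hγ β hβ0 h

end
end

section
/- Let Φ be a Borel measure on Q_p \ {0}, finite outside every neighbourhood of zero, satisfying Φ(M) = β Φ(γ₀ M) for every compact open M ⊂ Q_p \ {0}, with 0 < β < 1 and γ₀ ∈ Q_p, 0 < |γ₀|_p ≤ p^{-1}. Let g(t) = exp(∫_{Q_p \ {0}} (χ(ty) - 1) Φ(dy)) be the characteristic function of a distribution G, and let X₁, X₂, … be i.i.d. with distribution G. Then with B_n = γ₀^{-n} and k(n) = ⌊β^{-n}⌋, the characteristic functions of S_n = B_n^{-1}(X₁ + ⋯ + X_{k(n)}), namely g(γ₀^n t)^{⌊β^{-n}⌋} = exp(β^n ⌊β^{-n}⌋ ∫ (χ(ty)-1) Φ(dy)), converge to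 g(t) uniformly on compact subsets of Q_p as n → ∞. -/
open MeasureTheory Metric Filter Topology
open scoped ENNReal NNReal

noncomputable section

variable {p : ℕ} [Fact p.Prime]

/-
The scaling relation Φ(M) = β Φ(γ₀ M) on compact open sets avoiding 0 determines the push-forward
of Φ under y ↦ γ₀ y on every complement of a ball around 0, since compact open sets generate the
Borel sets and Φ is finite there. As χ(ty) - 1 vanishes for ‖y‖ ≤ ‖t‖⁻¹, the exponent
ψ(t) = ∫ (χ(ty) - 1) dΦ(y) satisfies ψ(γ₀ t) = β ψ(t). Hence g(γ₀ⁿ t)^⌊β⁻ⁿ⌋ = exp (⌊β⁻ⁿ⌋ βⁿ ψ(t)),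
where ⌊β⁻ⁿ⌋ βⁿ → 1 and ψ is bounded on compact sets, which gives uniform convergence there.
-/

section Ultrametric

open TopologicalSpace

variable {X : Type*} [MetricSpace X] [IsUltrametricDist X] [ProperSpace X]

theorem isTopologicalBasis_isCompact_isOpen :
    IsTopologicalBasis {M : Set X | IsCompact M ∧ IsOpen M} := by
  refine isTopologicalBasis_of_isOpen_of_nhds (fun _ hM => hM.2) fun x U hx hU => ?_
  obtain ⟨ε, hε, hεU⟩ := Metric.isOpen_iff.1 hU x hx
  refine ⟨ball x ε, ⟨?_, isOpen_ball⟩, mem_ball_self hε, hεU⟩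
  exact (isCompact_closedBall x ε).of_isClosed_subset
    (IsUltrametricDist.isClosed_ball x ε) ball_subset_closedBall

variable [MeasurableSpace X] [BorelSpace X]

theorem MeasureTheory.Measure.restrict_ext_of_isCompact_isOpen {μ ν : Measure X} {S : Set X}
    (hS : IsClopen S) (hμS : μ S ≠ ∞)
    (h : ∀ M ⊆ S, IsCompact M → IsOpen M → μ M = ν M) :
    μ.restrict S = ν.restrict S := by
  have hbasis := isTopologicalBasis_isCompact_isOpen (X := X)
  obtain ⟨T, hTC, hT, hTU⟩ :=
    isOpen_sUnion_countable {M : Set X | IsCompact M ∧ IsOpen M} fun _ hM => hM.2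
  refine Measure.ext_of_generateFrom_of_cover_subset (S := {M : Set X | IsCompact M ∧ IsOpen M})
    (by rw [BorelSpace.measurable_eq (α := X), hbasis.borel_eq_generateFrom])
    (fun _ hM _ hN _ => ⟨hM.1.inter hN.1, hM.2.inter hN.2⟩) hT hTC
    (hTU.trans hbasis.sUnion_eq) ?_ ?_
  · intro M _
    rw [Measure.restrict_apply' hS.isOpen.measurableSet]
    exact ne_top_of_le_ne_top hμS (measure_mono Set.inter_subset_right)
  · rintro M ⟨hMc, hMo⟩
    rw [Measure.restrict_apply' hS.isOpen.measurableSet,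
      Measure.restrict_apply' hS.isOpen.measurableSet]
    exact h _ Set.inter_subset_right (hMc.inter_right hS.isClosed) (hMo.inter hS.isOpen)

end Ultrametric

theorem padicFract_eq_zero_of_norm_le_one {x : ℚ_[p]} (hx : ‖x‖ ≤ 1) : padicFract x = 0 := by
  have hn : (-x.valuation).toNat = 0 :=
    Int.toNat_eq_zero.2 (by simpa using (Padic.norm_le_one_iff_val_nonneg x).1 hx)
  suffices ∀ (z : ℤ_[p]) (n : ℕ), n = 0 → (z.appr n : ℚ) / (p : ℚ) ^ n = 0 from this _ _ hn
  rintro z _ rfl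
  simpa using z.appr_lt 0

theorem padicChar_eq_one_of_norm_le_one {x : ℚ_[p]} (hx : ‖x‖ ≤ 1) : padicChar x = 1 := by
  simp [padicChar, padicFract_eq_zero_of_norm_le_one hx]

theorem norm_padicChar (x : ℚ_[p]) : ‖padicChar x‖ = 1 := by
  rw [padicChar, Complex.norm_exp]
  simp [Complex.mul_re]

def levyExponent (Φ : Measure ℚ_[p]) (t : ℚ_[p]) : ℂ :=
  ∫ y, (padicChar (t * y) - 1) ∂Φ

theorem integral_padicChar_sub_one_eq_setIntegral (μ : Measure ℚ_[p]) {t : ℚ_[p]} {R : ℝ}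
    (ht : ‖t‖ ≤ R) :
    ∫ y, (padicChar (t * y) - 1) ∂μ = ∫ y in (closedBall 0 R⁻¹)ᶜ, (padicChar (t * y) - 1) ∂μ := by
  refine (setIntegral_eq_integral_of_forall_compl_eq_zero fun y hy => ?_).symm
  replace hy : ‖y‖ ≤ R⁻¹ := by simpa using hy
  have hty : ‖t * y‖ ≤ 1 := by
    rw [norm_mul]
    calc ‖t‖ * ‖y‖ ≤ R * R⁻¹ := mul_le_mul ht hy (norm_nonneg y) ((norm_nonneg t).trans ht)
      _ ≤ 1 := mul_inv_le_one
  rw [padicChar_eq_one_of_norm_le_one hty, sub_self]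

theorem norm_levyExponent_le (Φ : Measure ℚ_[p]) (hΦfin : ∀ U ∈ 𝓝 (0 : ℚ_[p]), Φ Uᶜ < ⊤)
    {t : ℚ_[p]} {R : ℝ} (hR : 0 < R) (ht : ‖t‖ ≤ R) :
    ‖levyExponent Φ t‖ ≤ 2 * (Φ (closedBall 0 R⁻¹)ᶜ).toReal := by
  rw [levyExponent, integral_padicChar_sub_one_eq_setIntegral Φ ht]
  refine norm_setIntegral_le_of_norm_le_const (hΦfin _ (closedBall_mem_nhds 0 (inv_pos.2 hR)))
    fun y _ => (norm_sub_le _ _).trans ?_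
  rw [norm_padicChar, norm_one]
  norm_num

def HasScaling (Φ : Measure ℚ_[p]) (β : ℝ) (γ₀ : ℚ_[p]) : Prop :=
  ∀ M : Set ℚ_[p], IsCompact M → IsOpen M → 0 ∉ M →
    Φ M = ENNReal.ofReal β * Φ ((fun x => γ₀ * x) '' M)

theorem HasScaling.restrict_map_mul_left {Φ : Measure ℚ_[p]} {β : ℝ} {γ₀ : ℚ_[p]}
    (hΦ : HasScaling Φ β γ₀) (hΦfin : ∀ U ∈ 𝓝 (0 : ℚ_[p]), Φ Uᶜ < ⊤) (hγ0 : γ₀ ≠ 0)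
    {r : ℝ} (hr : 0 < r) :
    (Φ.map (γ₀ * ·)).restrict (closedBall 0 r)ᶜ =
      (ENNReal.ofReal β • Φ).restrict (closedBall 0 r)ᶜ := by
  have hS : IsClopen (closedBall (0 : ℚ_[p]) r)ᶜ :=
    (IsUltrametricDist.isClopen_closedBall 0 hr.ne').compl
  refine (Measure.restrict_ext_of_isCompact_isOpen hS ?_ fun M hMS hMc hMo => ?_).symm
  · exact ENNReal.mul_ne_top ENNReal.ofReal_ne_top
      (hΦfin _ (closedBall_mem_nhds 0 hr)).ne
  have hc : IsCompact ((γ₀ * ·) ⁻¹' M) := (Homeomorph.mulLeft₀ γ₀ hγ0).isCompact_preimage.2 hMc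
  have h0 : (0 : ℚ_[p]) ∉ (γ₀ * ·) ⁻¹' M := by
    simpa using fun h0 => hMS h0 (mem_closedBall_self hr.le)
  rw [Measure.smul_apply, smul_eq_mul, (measurableEmbedding_mulLeft₀ hγ0).map_apply,
    hΦ _ hc (hMo.preimage (continuous_const_mul γ₀)) h0,
    Set.image_preimage_eq M (mul_left_surjective₀ hγ0)]

theorem HasScaling.levyExponent_mul_left {Φ : Measure ℚ_[p]} {β : ℝ} {γ₀ : ℚ_[p]}
    (hΦ : HasScaling Φ β γ₀) (hΦfin : ∀ U ∈ 𝓝 (0 : ℚ_[p]), Φ Uᶜ < ⊤) (hβ : 0 ≤ β)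
    (hγ0 : γ₀ ≠ 0) (t : ℚ_[p]) :
    levyExponent Φ (γ₀ * t) = β * levyExponent Φ t := by
  set R := ‖t‖ + 1
  have hR : 0 < R := by positivity
  set S := (closedBall (0 : ℚ_[p]) R⁻¹)ᶜ
  calc levyExponent Φ (γ₀ * t) = ∫ y, (padicChar (t * y) - 1) ∂(Φ.map (γ₀ * ·)) := by
        rw [(measurableEmbedding_mulLeft₀ hγ0).integral_map]
        simp only [levyExponent, mul_assoc, mul_left_comm γ₀]
    _ = ∫ y in S, (padicChar (t * y) - 1) ∂(ENNReal.ofReal β • Φ) := by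
        rw [integral_padicChar_sub_one_eq_setIntegral _ (le_add_of_nonneg_right zero_le_one),
          hΦ.restrict_map_mul_left hΦfin hγ0 (inv_pos.2 hR)]
    _ = β * levyExponent Φ t := by
        rw [Measure.restrict_smul, integral_smul_measure, ENNReal.toReal_ofReal hβ,
          Complex.real_smul, levyExponent,
          integral_padicChar_sub_one_eq_setIntegral Φ (le_add_of_nonneg_right zero_le_one)]

theorem HasScaling.levyExponent_pow_mul {Φ : Measure ℚ_[p]} {β : ℝ} {γ₀ : ℚ_[p]}
    (hΦ : HasScaling Φ β γ₀) (hΦfin : ∀ U ∈ 𝓝 (0 : ℚ_[p]), Φ Uᶜ < ⊤) (hβ : 0 ≤ β)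
    (hγ0 : γ₀ ≠ 0) (n : ℕ) (t : ℚ_[p]) :
    levyExponent Φ (γ₀ ^ n * t) = β ^ n * levyExponent Φ t := by
  induction n with
  | zero => simp
  | succ n ih =>
    rw [pow_succ', mul_assoc, hΦ.levyExponent_mul_left hΦfin hβ hγ0, ih]
    ring

theorem tendsto_natFloor_inv_pow_mul_pow {β : ℝ} (hβ0 : 0 < β) (hβ1 : β < 1) :
    Tendsto (fun n : ℕ => (⌊(β ^ n)⁻¹⌋₊ : ℝ) * β ^ n) atTop (𝓝 1) := by
  have h := tendsto_nat_floor_div_atTop.comp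
    (tendsto_pow_atTop_atTop_of_one_lt ((one_lt_inv₀ hβ0).2 hβ1))
  refine h.congr fun n => ?_
  simp [inv_pow, div_eq_mul_inv]

theorem tendstoUniformlyOn_mul_of_tendsto_one {α ι : Type*} {l : Filter ι} {c : ι → ℂ}
    (hc : Tendsto c l (𝓝 1)) {ψ : α → ℂ} {K : Set α} {C : ℝ} (hψ : ∀ t ∈ K, ‖ψ t‖ ≤ C) :
    TendstoUniformlyOn (fun n t => c n * ψ t) ψ l K := by
  rw [Metric.tendstoUniformlyOn_iff]
  intro ε hε
  have hC : 0 < |C| + 1 := by positivity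
  filter_upwards [Metric.tendsto_nhds.1 hc (ε / (|C| + 1)) (div_pos hε hC)] with n hn t ht
  rw [dist_comm] at hn
  calc dist (ψ t) (c n * ψ t) = dist 1 (c n) * ‖ψ t‖ := by
        rw [dist_eq_norm, dist_eq_norm, ← norm_mul, sub_mul, one_mul]
    _ ≤ ε / (|C| + 1) * |C| :=
        mul_le_mul hn.le ((hψ t ht).trans (le_abs_self C)) (norm_nonneg _) (by positivity)
    _ < ε := by
        rw [div_mul_eq_mul_div, div_lt_iff₀ hC]
        nlinarith

theorem tendstoUniformlyOn_cexp_mul_of_tendsto_one {α ι : Type*} {l : Filter ι} {c : ι → ℂ}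
    (hc : Tendsto c l (𝓝 1)) {ψ : α → ℂ} {K : Set α} {C : ℝ} (hψ : ∀ t ∈ K, ‖ψ t‖ ≤ C) :
    TendstoUniformlyOn (fun n t => Complex.exp (c n * ψ t)) (fun t => Complex.exp (ψ t)) l K :=
  (tendstoUniformlyOn_mul_of_tendsto_one hc hψ).comp_cexp
    ⟨C, by rintro _ ⟨t, ht, rfl⟩; exact (Complex.re_le_norm _).trans (hψ t ht)⟩

theorem stmt_9_general {p : ℕ} [Fact p.Prime] (Φ : Measure ℚ_[p])
    (hΦfin : ∀ U ∈ 𝓝 (0 : ℚ_[p]), Φ Uᶜ < ⊤)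
    (β : ℝ) (hβ0 : 0 < β) (hβ1 : β < 1)
    (γ₀ : ℚ_[p]) (hγ0 : γ₀ ≠ 0)
    (hscale : ∀ M : Set ℚ_[p], IsCompact M → IsOpen M → 0 ∉ M →
      Φ M = ENNReal.ofReal β * Φ ((fun x => γ₀ * x) '' M))
    (G : Measure ℚ_[p])
    (hG : ∀ t : ℚ_[p], padicCharFun G t =
      Complex.exp (∫ y, (padicChar (t * y) - 1) ∂Φ)) :
    ∀ K : Set ℚ_[p], IsCompact K →
      TendstoUniformlyOn
        (fun n t => (padicCharFun G (γ₀ ^ n * t)) ^ (⌊(β ^ n)⁻¹⌋₊))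
        (padicCharFun G) atTop K := by
  intro K hK
  obtain ⟨R, hR, hKR⟩ := hK.isBounded.exists_pos_norm_le
  have hpow : ∀ n t, padicCharFun G (γ₀ ^ n * t) ^ ⌊(β ^ n)⁻¹⌋₊ =
      Complex.exp (((⌊(β ^ n)⁻¹⌋₊ * β ^ n : ℝ) : ℂ) * levyExponent Φ t) := by
    intro n t
    rw [hG, ← levyExponent, (show HasScaling Φ β γ₀ from hscale).levyExponent_pow_mul hΦfin
      hβ0.le hγ0, ← Complex.exp_nat_mul]
    push_cast
    rw [mul_assoc]
  simp only [hpow]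
  rw [show padicCharFun G = _ from funext hG]
  exact tendstoUniformlyOn_cexp_mul_of_tendsto_one
    ((Complex.continuous_ofReal.tendsto' 1 1 Complex.ofReal_one).comp
      (tendsto_natFloor_inv_pow_mul_pow hβ0 hβ1))
    fun t ht => norm_levyExponent_le Φ hΦfin hR (hKR t ht)

/-- Theorem 1(i): if `Φ` satisfies `Φ(M) = β Φ(γ₀ M)` and `g` is the characteristic
function `exp ∫ (χ(ty)-1) dΦ(y)` of a distribution `G`, then with `Bₙ = γ₀^{-n}`,
`k(n) = ⌊β^{-n}⌋` the characteristic functions `g(γ₀ⁿ t)^{⌊β^{-n}⌋}` of the normalized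
sums converge to `g` uniformly on compact sets. -/
theorem stmt_9 {p : ℕ} [Fact p.Prime] (Φ : Measure ℚ_[p]) (hΦ0 : Φ {0} = 0)
    (hΦfin : ∀ U ∈ 𝓝 (0 : ℚ_[p]), Φ Uᶜ < ⊤)
    (β : ℝ) (hβ0 : 0 < β) (hβ1 : β < 1)
    (γ₀ : ℚ_[p]) (hγ0 : γ₀ ≠ 0) (hγ : ‖γ₀‖ ≤ (p : ℝ)⁻¹)
    (hscale : ∀ M : Set ℚ_[p], IsCompact M → IsOpen M → 0 ∉ M →
      Φ M = ENNReal.ofReal β * Φ ((fun x => γ₀ * x) '' M))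
    (G : Measure ℚ_[p]) [IsProbabilityMeasure G]
    (hG : ∀ t : ℚ_[p], padicCharFun G t =
      Complex.exp (∫ y, (padicChar (t * y) - 1) ∂Φ)) :
    ∀ K : Set ℚ_[p], IsCompact K →
      TendstoUniformlyOn
        (fun n t => (padicCharFun G (γ₀ ^ n * t)) ^ (⌊(β ^ n)⁻¹⌋₊))
        (padicCharFun G) atTop K :=
  stmt_9_general Φ hΦfin β hβ0 hβ1 γ₀ hγ0 hscale G hG

end
end
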